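/- Let T be a finite tree, let a and b be adjacent vertices with h_b(a) > h_a(b) =: n, and consider the cutting-off-leaves strategy (so the player at a answers first, at time n). Then the silent player at b can determine their own position from the first announcement — that is, b is the unique neighbor b' of a with σ(b') = n, where σ(v) = 1 + (least m such that v is a leaf of G_m) — if and only if b is the unique neighbor b' of a whose height in the tree rooted at a satisfies h_a(b') = n. (This is the criterion established in the paper's proof: the edge {a, b} is the only edge incident to a with label h_a(b).) -/

import Mathlib

/-- A vertex is a leaf of a simple graph if it has exactly one neighbor. -/
def IsLeafVert {V : Type*} (H : SimpleGraph V) (v : V) : Prop :=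
  ∃! w, H.Adj v w

/-- Remove all leaves of a graph (a removed vertex keeps no incident edges, i.e. becomes
isolated, which models deleting it). -/
def pruneLeaves {V : Type*} (H : SimpleGraph V) : SimpleGraph V where
  Adj u v := H.Adj u v ∧ ¬ IsLeafVert H u ∧ ¬ IsLeafVert H v
  symm := by
    constructor
    intro u v h
    exact ⟨h.1.symm, h.2.2, h.2.1⟩
  loopless := by
    constructor
    intro v h
    exact H.irrefl h.1

/-- The pruning sequence: `G_0 = G` and `G_{n+1} = G_n` minus all leaves of `G_n`. -/
def pruneSeq {V : Type*} (G : SimpleGraph V) (n : ℕ) : SimpleGraph V :=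
  pruneLeaves^[n] G

open Classical in
/-- The announcement time of the cutting-off-leaves strategy: observing the other player at
`v`, announce at time `1 + (least n such that v is a leaf of G_n)`, never if no such `n`. -/
noncomputable def cutTime {V : Type*} (G : SimpleGraph V) (v : V) : ℕ∞ :=
  if h : ∃ n, IsLeafVert (pruneSeq G n) v then ((Nat.find h : ℕ∞) + 1) else ⊤

/-- The height of `v` in the tree rooted at `a`:
`1 +` the maximum of `dist v w` over all vertices `w` such that `v` lies on the (unique)
path from `a` to `w`, the latter being expressed by `dist a w = dist a v + dist v w`. -/
noncomputable def rootedHeight {V : Type*} [Fintype V] (T : SimpleGraph V) (a v : V) : ℕ :=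
  1 + (Finset.univ.filter fun w => T.dist a w = T.dist a v + T.dist v w).sup
        fun w => T.dist v w


set_option linter.unusedSectionVars false

namespace TreeAux

open SimpleGraph

variable {V : Type*} [Fintype V] {T : SimpleGraph V}

/-- The branch behind `v` as seen from `a`. -/
noncomputable def B (T : SimpleGraph V) (a v : V) : Finset V :=
  Finset.univ.filter fun w => T.dist a w = T.dist a v + T.dist v w

/-- Depth of the branch behind `v` as seen from `a`. -/
noncomputable def D (T : SimpleGraph V) (a v : V) : ℕ :=
  (B T a v).sup fun w => T.dist v w

lemma self_mem_B (a v : V) : v ∈ B T a v := by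
  simp [B]

lemma le_D_of_mem {a v w : V} (hw : w ∈ B T a v) : T.dist v w ≤ D T a v :=
  Finset.le_sup hw

lemma exists_D_attained (a v : V) : ∃ w ∈ B T a v, T.dist v w = D T a v := by
  obtain ⟨w, hw, h⟩ := Finset.exists_mem_eq_sup (B T a v) ⟨v, self_mem_B a v⟩
    (fun w => T.dist v w)
  exact ⟨w, hw, h.symm⟩

lemma mem_B_adj {a v : V} (hav : T.Adj a v) {w : V} :
    w ∈ B T a v ↔ T.dist a w = T.dist v w + 1 := by
  have h1 : T.dist a v = 1 := (SimpleGraph.dist_eq_one_iff_adj).2 hav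
  simp [B, h1, Nat.add_comm]

/-- Two walks of length `dist` between the same endpoints in a tree are equal. -/
lemma walk_eq_of_dist (hT : T.IsTree) {u w : V} (p q : T.Walk u w)
    (hp : p.length = T.dist u w) (hq : q.length = T.dist u w) : p = q :=
  (hT.existsUnique_path u w).unique (p.isPath_of_length_eq_dist hp)
    (q.isPath_of_length_eq_dist hq)

/-- In a tree, adjacent vertices have different distances to any vertex. -/
lemma dist_ne (hT : T.IsTree) {a v : V} (hav : T.Adj a v) (w : V) :
    T.dist a w ≠ T.dist v w := by
  classical
  intro h
  obtain ⟨p, hp⟩ := hT.isConnected.exists_walk_length_eq_dist a w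
  by_cases hv : v ∈ p.support
  · -- then dist v w < dist a w
    have hspec := p.take_spec hv
    have hlen : (p.takeUntil v hv).length + (p.dropUntil v hv).length = p.length := by
      rw [← SimpleGraph.Walk.length_append, hspec]
    have htp : (p.takeUntil v hv).length ≠ 0 := by
      intro h0
      exact hav.ne (SimpleGraph.Walk.eq_of_length_eq_zero h0)
    have hd : T.dist v w ≤ (p.dropUntil v hv).length := SimpleGraph.dist_le _
    omega
  · obtain ⟨q, hq⟩ := hT.isConnected.exists_walk_length_eq_dist v w
    have hp' : p.IsPath := p.isPath_of_length_eq_dist hp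
    have hr : (SimpleGraph.Walk.cons hav.symm p).IsPath := hp'.cons hv
    have hq' : q.IsPath := q.isPath_of_length_eq_dist hq
    have := (hT.existsUnique_path v w).unique hr hq'
    have hlen := congrArg SimpleGraph.Walk.length this
    simp only [SimpleGraph.Walk.length_cons, hp, hq, h] at hlen
    omega

lemma dist_dichotomy (hT : T.IsTree) {a v : V} (hav : T.Adj a v) (w : V) :
    T.dist a w = T.dist v w + 1 ∨ T.dist v w = T.dist a w + 1 := by
  have h1 : T.dist a v = 1 := (SimpleGraph.dist_eq_one_iff_adj).2 hav
  have t1 : T.dist a w ≤ T.dist a v + T.dist v w := hT.isConnected.dist_triangle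
  have t2 : T.dist v w ≤ T.dist v a + T.dist a w := hT.isConnected.dist_triangle
  have h2 : T.dist v a = 1 := (SimpleGraph.dist_eq_one_iff_adj).2 hav.symm
  have := dist_ne hT hav w
  omega

/-- Branch merging: if `x` and `v` are distinct neighbors of `u`, and `w` lies behind `v`
from `u`, then `w` lies behind `u` from `x`. -/
lemma merge (hT : T.IsTree) {u x v : V} (hux : T.Adj u x) (huv : T.Adj u v) (hxv : x ≠ v)
    {w : V} (h : T.dist u w = T.dist v w + 1) : T.dist x w = T.dist u w + 1 := by
  rcases dist_dichotomy hT hux w with hbad | hgood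
  · exfalso
    obtain ⟨p, hp⟩ := hT.isConnected.exists_walk_length_eq_dist x w
    obtain ⟨q, hq⟩ := hT.isConnected.exists_walk_length_eq_dist v w
    have hxw : T.dist x w = T.dist v w := by omega
    have hl1 : (SimpleGraph.Walk.cons hux p).length = T.dist u w := by
      simp [SimpleGraph.Walk.length_cons, hp, hxw]; omega
    have hl2 : (SimpleGraph.Walk.cons huv q).length = T.dist u w := by
      simp [SimpleGraph.Walk.length_cons, hq]; omega
    have heq := walk_eq_of_dist hT _ _ hl1 hl2
    have := congrArg (fun r => SimpleGraph.Walk.getVert r 1) heq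
    simp only [SimpleGraph.Walk.getVert_cons_succ, SimpleGraph.Walk.getVert_zero] at this
    exact hxv this
  · exact hgood

/-- One can step from `v` toward `w` along an edge. -/
lemma exists_step (hT : T.IsTree) {v w : V} (h : v ≠ w) :
    ∃ u, T.Adj v u ∧ T.dist v w = T.dist u w + 1 := by
  obtain ⟨p, hp⟩ := hT.isConnected.exists_walk_length_eq_dist v w
  have hpos : 0 < T.dist v w := hT.isConnected.pos_dist_of_ne h
  cases p with
  | nil => simp at hpos
  | @cons _ u _ hadj q =>
    refine ⟨u, hadj, ?_⟩
    have hq : T.dist u w ≤ q.length := SimpleGraph.dist_le _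
    have hlen : q.length + 1 = T.dist v w := by
      simpa [SimpleGraph.Walk.length_cons] using hp
    have t : T.dist v w ≤ T.dist v u + T.dist u w := hT.isConnected.dist_triangle
    have h1 : T.dist v u = 1 := (SimpleGraph.dist_eq_one_iff_adj).2 hadj
    omega

/-- A step into the branch: if `w ≠ v` lies behind `v` from `a`, the first step from `v`
toward `w` avoids `a`. -/
lemma branch_step (hT : T.IsTree) {a v : V} (hav : T.Adj a v) {w : V}
    (hw : w ∈ B T a v) (hwv : w ≠ v) :
    ∃ u, T.Adj v u ∧ u ≠ a ∧ T.dist v w = T.dist u w + 1 := by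
  obtain ⟨u, hvu, hstep⟩ := exists_step hT (Ne.symm hwv)
  refine ⟨u, hvu, ?_, hstep⟩
  rintro rfl
  rw [mem_B_adj hav] at hw
  omega

/-- Depth grows across an edge away from the root. -/
lemma D_lower (hT : T.IsTree) {a v u : V} (hav : T.Adj a v) (hvu : T.Adj v u)
    (hua : u ≠ a) : D T v u + 1 ≤ D T a v := by
  obtain ⟨w, hw, hdw⟩ := exists_D_attained (T := T) v u
  rw [mem_B_adj hvu] at hw
  have hmem : w ∈ B T a v := by
    rw [mem_B_adj hav]
    exact merge hT hav.symm hvu (fun h => hua h.symm) hw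
  calc D T v u + 1 = T.dist v w := by omega
    _ ≤ D T a v := le_D_of_mem hmem

lemma pruneLeaves_adj {H : SimpleGraph V} {u v : V} :
    (pruneLeaves H).Adj u v ↔ H.Adj u v ∧ ¬ IsLeafVert H u ∧ ¬ IsLeafVert H v := Iff.rfl

lemma not_leaf_of_deep (hT : T.IsTree) {m : ℕ}
    (ih : ∀ x y, (pruneSeq T m).Adj x y ↔ T.Adj x y ∧ m ≤ D T y x ∧ m ≤ D T x y)
    {u v : V} (huv : T.Adj u v) (h1 : m ≤ D T u v) (h2 : m + 1 ≤ D T v u) :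
    ¬ IsLeafVert (pruneSeq T m) u := by
  obtain ⟨w0, hw0, hdw0⟩ := exists_D_attained (T := T) v u
  have hw0u : w0 ≠ u := by
    rintro rfl
    rw [SimpleGraph.dist_self] at hdw0
    omega
  obtain ⟨x, hux, hxv, hstep⟩ := branch_step hT huv.symm hw0 hw0u
  have hDux : m ≤ D T u x := by
    have hmem : w0 ∈ B T u x := (mem_B_adj hux).2 hstep
    have := le_D_of_mem hmem
    omega
  have hDxu : m ≤ D T x u := by
    obtain ⟨w1, hw1, hdw1⟩ := exists_D_attained (T := T) u v
    rw [mem_B_adj huv] at hw1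
    have hm : T.dist x w1 = T.dist u w1 + 1 := merge hT hux huv hxv hw1
    have hmem : w1 ∈ B T x u := (mem_B_adj hux.symm).2 hm
    have := le_D_of_mem hmem
    omega
  intro hleaf
  obtain ⟨y, _, huniq⟩ := hleaf
  have e1 : (pruneSeq T m).Adj u v := (ih u v).2 ⟨huv, by omega, h1⟩
  have e2 : (pruneSeq T m).Adj u x := (ih u x).2 ⟨hux, hDxu, hDux⟩
  exact hxv ((huniq x e2).trans (huniq v e1).symm)

lemma leaf_of_shallow (hT : T.IsTree) {m : ℕ}
    (ih : ∀ x y, (pruneSeq T m).Adj x y ↔ T.Adj x y ∧ m ≤ D T y x ∧ m ≤ D T x y)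
    {u v : V} (huv : T.Adj u v) (h1 : m ≤ D T u v) (h2 : m ≤ D T v u)
    (h3 : D T v u ≤ m) : IsLeafVert (pruneSeq T m) u := by
  refine ⟨v, (ih u v).2 ⟨huv, h2, h1⟩, ?_⟩
  intro x hx
  by_contra hxv
  obtain ⟨hTux, hDxu, hDux⟩ := (ih u x).1 hx
  obtain ⟨w, hw, hdw⟩ := exists_D_attained (T := T) u x
  rw [mem_B_adj hTux] at hw
  have hm : T.dist v w = T.dist u w + 1 := merge hT huv hTux (fun h => hxv h.symm) hw
  have hmem : w ∈ B T v u := (mem_B_adj huv.symm).2 hm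
  have := le_D_of_mem hmem
  omega

lemma pruneSeq_adj (hT : T.IsTree) : ∀ (m : ℕ) (u v : V),
    (pruneSeq T m).Adj u v ↔ T.Adj u v ∧ m ≤ D T v u ∧ m ≤ D T u v := by
  intro m
  induction m with
  | zero => intro u v; simp [pruneSeq]
  | succ m ih =>
    intro u v
    have hps : pruneSeq T (m + 1) = pruneLeaves (pruneSeq T m) :=
      Function.iterate_succ_apply' _ _ _
    rw [hps, pruneLeaves_adj]
    constructor
    · rintro ⟨he, hu, hv⟩
      obtain ⟨hTuv, h1, h2⟩ := (ih u v).1 he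
      refine ⟨hTuv, ?_, ?_⟩
      · by_contra hc
        exact hu (leaf_of_shallow hT ih hTuv h2 h1 (by omega))
      · by_contra hc
        exact hv (leaf_of_shallow hT ih hTuv.symm h1 h2 (by omega))
    · rintro ⟨hTuv, h1, h2⟩
      refine ⟨(ih u v).2 ⟨hTuv, by omega, by omega⟩, ?_, ?_⟩
      · exact not_leaf_of_deep hT ih hTuv (by omega) h1
      · exact not_leaf_of_deep hT ih hTuv.symm (by omega) h2

lemma rootedHeight_eq_D (T : SimpleGraph V) (a v : V) :
    rootedHeight T a v = 1 + D T a v := rfl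

lemma not_leaf_of_lt (hT : T.IsTree) {a v : V} (hav : T.Adj a v) {k : ℕ}
    (h1 : k ≤ D T v a) (h2 : k + 1 ≤ D T a v) : ¬ IsLeafVert (pruneSeq T k) v :=
  not_leaf_of_deep hT (pruneSeq_adj hT k) hav.symm h1 h2

lemma leaf_D (hT : T.IsTree) {a v : V} (hav : T.Adj a v) (hlt : D T a v < D T v a) :
    IsLeafVert (pruneSeq T (D T a v)) v := by
  refine ⟨a, (pruneSeq_adj hT (D T a v) v a).2 ⟨hav.symm, le_refl _, by omega⟩, ?_⟩
  intro u hu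
  by_contra hua
  obtain ⟨hTvu, h1, h2⟩ := (pruneSeq_adj hT (D T a v) v u).1 hu
  have := D_lower hT hav hTvu hua
  omega

lemma cutTime_eq (hT : T.IsTree) {a v : V} (hav : T.Adj a v) (hlt : D T a v < D T v a) :
    cutTime T v = ((D T a v + 1 : ℕ) : ℕ∞) := by
  classical
  have hex : ∃ m, IsLeafVert (pruneSeq T m) v := ⟨D T a v, leaf_D hT hav hlt⟩
  rw [cutTime, dif_pos hex]
  have hfind : Nat.find hex = D T a v := by
    rw [Nat.find_eq_iff]
    refine ⟨leaf_D hT hav hlt, ?_⟩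
    intro k hk
    exact not_leaf_of_lt hT hav (by omega) (by omega)
  rw [hfind]
  push_cast
  ring

lemma leaf_bound (hT : T.IsTree) {a v : V} (hav : T.Adj a v) {m : ℕ}
    (hleaf : IsLeafVert (pruneSeq T m) v) : D T a v ≤ m ∨ D T v a ≤ m := by
  by_contra hc
  push_neg at hc
  exact not_leaf_of_lt hT hav (by omega) (by omega) hleaf

end TreeAux

/-- Let `a`, `b` be adjacent vertices of a finite tree with `h_b(a) > h_a(b) = n`, and play
the cutting-off-leaves strategy (the player at `a` answers first, at time `n`). Then the
silent player at `b` can determine their own position from the first announcement — i.e.,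
`b` is the unique neighbor `b'` of `a` with announcement time `σ(b') = n` — if and only if
`b` is the unique neighbor `b'` of `a` with `h_a(b') = n`. -/
theorem second_player_learns_iff_unique_height {V : Type*} [Fintype V] (T : SimpleGraph V)
    (hT : T.IsTree) (a b : V) (hab : T.Adj a b) (n : ℕ)
    (hn : rootedHeight T a b = n) (hlt : rootedHeight T a b < rootedHeight T b a) :
    (cutTime T b = (n : ℕ∞) ∧ ∀ b', T.Adj a b' → cutTime T b' = (n : ℕ∞) → b' = b) ↔
    (rootedHeight T a b = n ∧ ∀ b', T.Adj a b' → rootedHeight T a b' = n → b' = b) := by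
  classical
  have hn1 : n = 1 + TreeAux.D T a b := by
    rw [← hn, TreeAux.rootedHeight_eq_D]
  rw [TreeAux.rootedHeight_eq_D, TreeAux.rootedHeight_eq_D] at hlt
  have hK : ∀ b', T.Adj a b' → n ≤ TreeAux.D T b' a := by
    intro b' hb'
    by_cases hbb : b' = b
    · subst hbb
      omega
    · have := TreeAux.D_lower hT hb'.symm hab (fun h => hbb h.symm)
      omega
  have hE : ∀ b', T.Adj a b' →
      (cutTime T b' = (n : ℕ∞) ↔ rootedHeight T a b' = n) := by
    intro b' hb'
    have hK' := hK b' hb'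
    constructor
    · intro hc
      have hex : ∃ m, IsLeafVert (pruneSeq T m) b' := by
        by_contra hne
        rw [cutTime, dif_neg hne] at hc
        exact absurd hc (by simp)
      have hceq : ((Nat.find hex + 1 : ℕ) : ℕ∞) = ((n : ℕ) : ℕ∞) := by
        rw [cutTime, dif_pos hex] at hc
        push_cast
        exact hc
      have hfn : Nat.find hex + 1 = n := Nat.cast_inj.mp hceq
      have hleaf := Nat.find_spec hex
      have hD : TreeAux.D T a b' ≤ Nat.find hex := by
        rcases TreeAux.leaf_bound hT hb' hleaf with h | h
        · exact h
        · omega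
      have hlt' : TreeAux.D T a b' < TreeAux.D T b' a := by omega
      have hct := TreeAux.cutTime_eq hT hb' hlt'
      rw [hc] at hct
      have : n = TreeAux.D T a b' + 1 := Nat.cast_inj.mp hct
      rw [TreeAux.rootedHeight_eq_D]
      omega
    · intro hr
      rw [TreeAux.rootedHeight_eq_D] at hr
      have hlt' : TreeAux.D T a b' < TreeAux.D T b' a := by omega
      rw [TreeAux.cutTime_eq hT hb' hlt']
      norm_cast
      omega
  constructor
  · rintro ⟨hcb, huniq⟩
    exact ⟨hn, fun b' hb' hr => huniq b' hb' ((hE b' hb').2 hr)⟩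
  · rintro ⟨_, huniq⟩
    exact ⟨(hE b hab).2 hn, fun b' hb' hc => huniq b' hb' ((hE b' hb').1 hc)⟩
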